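/- Under the GL_q(N) differential-algebra relations and assuming L invertible, the matrix Θ* := J L⁻¹ W̄ (with W̄ = 1 + λJω) satisfies: (i) Θ*₁ T₂ = T₂ R̂ Θ*₂ R̂⁻¹; (ii) R̂⁻¹ Θ*₂ R̂ J₂ = −J₂ R̂ Θ*₂ R̂⁻¹; (iii) R̂ Θ*₂ R̂ Θ*₂ = −Θ*₂ R̂ Θ*₂ R̂⁻¹; (iv) R̂⁻¹ Θ*₂ R̂ L₂ = L₂ R̂ Θ*₂ R̂⁻¹; (v) R̂ Θ*₂ R̂⁻¹ ω₂ + ω₂ R̂⁻¹ Θ*₂ R̂ = −(W L⁻¹ W̄)₂ R̂, where W = 1 + λωJ. -/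
import Mathlib


open scoped BigOperators

noncomputable section

/-- The Drinfeld–Jimbo R-matrix of `GL_q(N)`:
`R^{i1 i2}_{j1 j2} = δ^{i1}_{j1} δ^{i2}_{j2} (1 + (q−1) δ^{i1 i2})
 + (q−q⁻¹) δ^{i1}_{j2} δ^{i2}_{j1} Θ_{i1 i2}` with `Θ_{ij} = 1` iff `i > j`. -/
def DJR {K : Type*} [Field K] (q : K) (N : ℕ) :
    Matrix (Fin N × Fin N) (Fin N × Fin N) K :=
  Matrix.of fun i j =>
    (if i.1 = j.1 ∧ i.2 = j.2 then 1 + (q - 1) * (if i.1 = i.2 then 1 else 0) else 0) +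
      (q - q⁻¹) * (if i.1 = j.2 ∧ i.2 = j.1 ∧ i.2 < i.1 then 1 else 0)

/-- `R̂ = P R`, i.e. `R̂^{i1 i2}_{j1 j2} = R^{i2 i1}_{j1 j2}`. -/
def DJRhat {K : Type*} [Field K] (q : K) (N : ℕ) :
    Matrix (Fin N × Fin N) (Fin N × Fin N) K :=
  Matrix.of fun i j => DJR q N (i.2, i.1) j

/-- `R̂` regarded as a scalar matrix over the algebra `A`. -/
def RhA {K : Type*} [Field K] (q : K) (N : ℕ) (A : Type*) [Ring A] [Algebra K A] :
    Matrix (Fin N × Fin N) (Fin N × Fin N) A :=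
  (DJRhat q N).map (algebraMap K A)

/-- `R̂⁻¹ = R̂ − λ·Id` (by the Hecke condition) regarded as a scalar matrix over `A`. -/
def RhInvA {K : Type*} [Field K] (q : K) (N : ℕ) (A : Type*) [Ring A] [Algebra K A] :
    Matrix (Fin N × Fin N) (Fin N × Fin N) A :=
  (DJRhat q N - (q - q⁻¹) • 1).map (algebraMap K A)

/-- `x₂ = 1 ⊗ x`, i.e. `(x₂)^{i1 i2}_{j1 j2} = δ^{i1}_{j1} x^{i2}_{j2}`. -/
def Mat2 {N : ℕ} {A : Type*} [Ring A] (x : Matrix (Fin N) (Fin N) A) :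
    Matrix (Fin N × Fin N) (Fin N × Fin N) A :=
  Matrix.of fun i j => if i.1 = j.1 then x i.2 j.2 else 0

/-- `x₁ = x ⊗ 1`, i.e. `(x₁)^{i1 i2}_{j1 j2} = x^{i1}_{j1} δ^{i2}_{j2}`. -/
def Mat1 {N : ℕ} {A : Type*} [Ring A] (x : Matrix (Fin N) (Fin N) A) :
    Matrix (Fin N × Fin N) (Fin N × Fin N) A :=
  Matrix.of fun i j => if i.2 = j.2 then x i.1 j.1 else 0

/-- The quantum trace `Tr_q(Y) = Σ_i q^{2(N−i)+1} Y^i_i`. -/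
def TrqA {K : Type*} [Field K] (q : K) (N : ℕ) {A : Type*} [Ring A] [Algebra K A]
    (Y : Matrix (Fin N) (Fin N) A) : A :=
  ∑ i : Fin N, algebraMap K A (q ^ (2 * (N - 1 - (i : ℕ)) + 1)) * Y i i

/-- The partial quantum trace over the first tensor factor. -/
def Trq1A {K : Type*} [Field K] (q : K) (N : ℕ) {A : Type*} [Ring A] [Algebra K A]
    (M : Matrix (Fin N × Fin N) (Fin N × Fin N) A) : Matrix (Fin N) (Fin N) A :=
  Matrix.of fun i2 j2 =>
    ∑ i1 : Fin N, algebraMap K A (q ^ (2 * (N - 1 - (i1 : ℕ)) + 1)) * M (i1, i2) (i1, j2)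

/-- The ten commutation relations of the `GL_q(N)` differential algebra. -/
def GLqRels {K : Type*} [Field K] (q : K) (N : ℕ) {A : Type*} [Ring A] [Algebra K A]
    (ω L J T : Matrix (Fin N) (Fin N) A) : Prop :=
  Mat2 ω * RhInvA q N A * Mat2 ω * RhA q N A
      = -(RhInvA q N A * Mat2 ω * RhInvA q N A * Mat2 ω) ∧
  Mat2 ω * RhA q N A * Mat2 L * RhA q N A = RhA q N A * Mat2 L * RhA q N A * Mat2 ω ∧
  Mat2 ω * RhA q N A * Mat2 J * RhA q N A + RhA q N A * Mat2 J * RhA q N A * Mat2 ω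
      = -(RhA q N A) ∧
  Mat2 L * RhA q N A * Mat2 L * RhA q N A = RhA q N A * Mat2 L * RhA q N A * Mat2 L ∧
  Mat2 J * RhA q N A * Mat2 L * RhA q N A = RhA q N A * Mat2 L * RhA q N A * Mat2 J ∧
  Mat2 J * RhA q N A * Mat2 J * RhA q N A = -(RhInvA q N A * Mat2 J * RhA q N A * Mat2 J) ∧
  RhA q N A * Mat1 T * Mat2 T = Mat1 T * Mat2 T * RhA q N A ∧
  Mat1 ω * Mat2 T = Mat2 T * RhInvA q N A * Mat2 ω * RhInvA q N A ∧
  Mat1 J * Mat2 T = Mat2 T * RhA q N A * Mat2 J * RhA q N A ∧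
  Mat1 L * Mat2 T = Mat2 T * RhA q N A * Mat2 L * RhA q N A



section AuxProof

set_option maxHeartbeats 3200000 in
theorem hecke {K : Type*} [Field K] (q : K) (hq : q ≠ 0) (N : ℕ) :
    DJRhat q N * DJRhat q N = (q - q⁻¹) • DJRhat q N + 1 := by
  ext i j
  simp only [Matrix.mul_apply, DJRhat, DJR, Matrix.of_apply, Matrix.add_apply,
    Matrix.smul_apply, Matrix.one_apply, smul_eq_mul]
  rw [Fintype.sum_prod_type]
  simp only [add_mul, mul_add, Finset.sum_add_distrib]
  simp only [ite_and, mul_ite, ite_mul, mul_zero, zero_mul, mul_one, one_mul,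
    Finset.sum_ite_eq, Finset.sum_ite_eq', Finset.mem_univ, if_true,
    Finset.sum_const_zero, Finset.sum_ite_irrel]
  obtain ⟨i1,i2⟩ := i
  obtain ⟨j1,j2⟩ := j
  simp only [Prod.mk.injEq]
  split_ifs <;> first | rfl | omega | (field_simp; try ring)


theorem RhInv_eq {K : Type*} [Field K] (q : K) (N : ℕ) (A : Type*) [Ring A] [Algebra K A] :
    RhInvA q N A = RhA q N A - (q - q⁻¹) • (1 : Matrix (Fin N × Fin N) (Fin N × Fin N) A) := by
  ext i j
  simp only [RhInvA, RhA, Matrix.map_apply, Matrix.sub_apply, Matrix.smul_apply,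
    Matrix.one_apply, map_sub, smul_eq_mul, map_mul, apply_ite (algebraMap K A),
    map_one, map_zero]
  split_ifs <;> simp [Algebra.smul_def]

theorem Rh_mul_RhInv {K : Type*} [Field K] (q : K) (hq : q ≠ 0) (N : ℕ) (A : Type*)
    [Ring A] [Algebra K A] : RhA q N A * RhInvA q N A = 1 := by
  have h : DJRhat q N * (DJRhat q N - (q - q⁻¹) • 1) = 1 := by
    rw [mul_sub, hecke q hq N, mul_smul_comm, mul_one]
    abel
  calc RhA q N A * RhInvA q N A
      = (DJRhat q N * (DJRhat q N - (q - q⁻¹) • 1)).map (algebraMap K A) :=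
        (Matrix.map_mul).symm
    _ = (1 : Matrix (Fin N × Fin N) (Fin N × Fin N) K).map (algebraMap K A) := by rw [h]
    _ = 1 := Matrix.map_one _ (map_zero _) (map_one _)

theorem RhInv_mul_Rh {K : Type*} [Field K] (q : K) (hq : q ≠ 0) (N : ℕ) (A : Type*)
    [Ring A] [Algebra K A] : RhInvA q N A * RhA q N A = 1 := by
  have h : (DJRhat q N - (q - q⁻¹) • 1) * DJRhat q N = 1 := by
    rw [sub_mul, hecke q hq N, smul_mul_assoc, one_mul]
    abel
  calc RhInvA q N A * RhA q N A
      = ((DJRhat q N - (q - q⁻¹) • 1) * DJRhat q N).map (algebraMap K A) :=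
        (Matrix.map_mul).symm
    _ = (1 : Matrix (Fin N × Fin N) (Fin N × Fin N) K).map (algebraMap K A) := by rw [h]
    _ = 1 := Matrix.map_one _ (map_zero _) (map_one _)

section MatLemmas
variable {N : ℕ} {A : Type*} [Ring A]


theorem Mat2_mul (x y : Matrix (Fin N) (Fin N) A) : Mat2 (x*y) = Mat2 x * Mat2 y := by
  ext i j
  simp only [Mat2, Matrix.of_apply, Matrix.mul_apply, Fintype.sum_prod_type, ite_mul,
    mul_ite, zero_mul, mul_zero, Finset.sum_ite_eq, Finset.sum_ite_eq', Finset.mem_univ,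
    if_true, Finset.sum_const_zero, Finset.sum_ite_irrel]

theorem Mat1_mul (x y : Matrix (Fin N) (Fin N) A) : Mat1 (x*y) = Mat1 x * Mat1 y := by
  ext i j
  simp only [Mat1, Matrix.of_apply, Matrix.mul_apply, Fintype.sum_prod_type, ite_mul,
    mul_ite, zero_mul, mul_zero, Finset.sum_ite_eq, Finset.sum_ite_eq', Finset.mem_univ,
    if_true, Finset.sum_const_zero, Finset.sum_ite_irrel, Finset.sum_comm (γ := Fin N)]
theorem Mat2_one : Mat2 (1 : Matrix (Fin N) (Fin N) A) = 1 := by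
  ext i j
  simp only [Mat2, Matrix.of_apply, Matrix.one_apply, Prod.ext_iff]
  split_ifs <;> simp_all
theorem Mat1_one : Mat1 (1 : Matrix (Fin N) (Fin N) A) = 1 := by
  ext i j
  simp only [Mat1, Matrix.of_apply, Matrix.one_apply, Prod.ext_iff]
  split_ifs <;> simp_all
theorem Mat2_add (x y : Matrix (Fin N) (Fin N) A) : Mat2 (x+y) = Mat2 x + Mat2 y := by
  ext i j
  simp only [Mat2, Matrix.of_apply, Matrix.add_apply]
  split_ifs <;> simp_all
theorem Mat1_add (x y : Matrix (Fin N) (Fin N) A) : Mat1 (x+y) = Mat1 x + Mat1 y := by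
  ext i j
  simp only [Mat1, Matrix.of_apply, Matrix.add_apply]
  split_ifs <;> simp_all
theorem Mat2_smul {K : Type*} [Field K] [Algebra K A] (l : K) (x : Matrix (Fin N) (Fin N) A) :
    Mat2 (l • x) = l • Mat2 x := by
  ext i j
  simp only [Mat2, Matrix.of_apply, Matrix.smul_apply]
  split_ifs <;> simp_all
theorem Mat1_smul {K : Type*} [Field K] [Algebra K A] (l : K) (x : Matrix (Fin N) (Fin N) A) :
    Mat1 (l • x) = l • Mat1 x := by
  ext i j
  simp only [Mat1, Matrix.of_apply, Matrix.smul_apply]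
  split_ifs <;> simp_all

end MatLemmas

set_option maxHeartbeats 1000000 in
theorem key_abstract {K : Type*} [Field K] {B : Type*} [Ring B] [Algebra K B] (l : K)
    (r s w j e k v t w1 j1 e1 k1 : B)
    (hv : v = 1 + l • (j*w))
    (hs : s = r - l • (1:B))
    (hrs : r * s = 1) (hsr : s * r = 1)
    (h1 : w*s*w*r = -(s*w*s*w))
    (h2 : w*r*e*r = r*e*r*w)
    (h3 : w*r*j*r + r*j*r*w = -r)
    (h4 : e*r*e*r = r*e*r*e)
    (h5 : j*r*e*r = r*e*r*j)
    (h6 : j*r*j*r = -(s*j*r*j))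
    (hek : e*k = 1) (hke : k*e = 1)
    (h8 : w1*t = t*s*w*s) (h9 : j1*t = t*r*j*r) (h10 : e1*t = t*r*e*r)
    (hke1 : k1*e1 = 1) :
    (j1*k1*(1+l•(j1*w1)))*t = t*r*(j*k*v)*s ∧
    s*(j*k*v)*r*j = -(j*r*(j*k*v)*s) ∧
    r*(j*k*v)*r*(j*k*v) = -((j*k*v)*r*(j*k*v)*s) ∧
    s*(j*k*v)*r*e = e*r*(j*k*v)*s ∧
    r*(j*k*v)*s*w + w*s*(j*k*v)*r = -((1+l•(w*j))*k*v*r) := by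
  have srX : ∀ x : B, s*(r*x) = x := fun x => by rw [← mul_assoc, hsr, one_mul]
  have rsX : ∀ x : B, r*(s*x) = x := fun x => by rw [← mul_assoc, hrs, one_mul]
  have ekX : ∀ x : B, e*(k*x) = x := fun x => by rw [← mul_assoc, hek, one_mul]
  have keX : ∀ x : B, k*(e*x) = x := fun x => by rw [← mul_assoc, hke, one_mul]
  have ke1X : ∀ x : B, k1*(e1*x) = x := fun x => by rw [← mul_assoc, hke1, one_mul]
  have hrr2 : r*r = l•r + 1 := by
    have h := hrs
    rw [hs, mul_sub, mul_smul_comm, mul_one, sub_eq_iff_eq_add] at h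
    rw [h]; abel
  have hrr : ∀ x : B, r*(r*x) = l•(r*x) + x := fun x => by
    rw [← mul_assoc, hrr2, add_mul, smul_mul_assoc, one_mul]
  have hsplit : ∀ x : B, s*x = r*x - l•x := fun x => by
    rw [hs]; simp only [sub_mul, one_mul, smul_mul_assoc]
  have hd4 : ∀ x : B, w*(r*(j*x)) = -x - r*(j*(r*(w*(s*x)))) := by
    intro x
    have h := congrArg (· * (s*x)) h3
    simp only [add_mul, mul_assoc, neg_mul, rsX] at h
    exact eq_sub_of_add_eq h
  have h6x : ∀ x : B, j*(r*(j*(r*x))) = -(s*(j*(r*(j*x)))) := by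
    intro x
    have h := congrArg (· * x) h6
    simpa only [mul_assoc, neg_mul] using h
  have h6s : ∀ x : B, s*(j*(r*(j*x))) = -(j*(r*(j*(r*x)))) := fun x => by
    rw [h6x x, neg_neg]
  have hd1 : ∀ x : B, r*(j*(r*(j*x))) = -(j*(r*(j*(s*x)))) := by
    intro x
    have h := congrArg (fun y => r*(y*(s*x))) h6
    simpa only [mul_assoc, neg_mul, mul_neg, srX, rsX] using h
  have hsjrjs : ∀ z : B, s*(j*(r*(j*(s*z)))) = -(j*(r*(j*z))) := by
    intro z
    have h := congrArg (fun y => s*y) (hd1 z)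
    simp only [mul_neg, srX] at h
    rw [h, neg_neg]
  have h1x : ∀ x : B, w*(s*(w*(r*x))) = -(s*(w*(s*(w*x)))) := by
    intro x
    have h := congrArg (· * x) h1
    simpa only [mul_assoc, neg_mul] using h
  -- commutation with M = r*e*r
  have hw' : ∀ y : B, w*(r*(e*(r*y))) = r*(e*(r*(w*y))) := by
    intro y; have h := congrArg (· * y) h2; simpa only [mul_assoc] using h
  have hj' : ∀ y : B, j*(r*(e*(r*y))) = r*(e*(r*(j*y))) := by
    intro y; have h := congrArg (· * y) h5; simpa only [mul_assoc] using h
  have he' : ∀ y : B, e*(r*(e*(r*y))) = r*(e*(r*(e*y))) := by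
    intro y; have h := congrArg (· * y) h4; simpa only [mul_assoc] using h
  have hk' : ∀ y : B, k*(r*(e*(r*y))) = r*(e*(r*(k*y))) := by
    intro y
    conv_lhs => rw [← ekX y]
    rw [← he' (k*y)]
    simp only [keX]
  have hv' : ∀ y : B, v*(r*(e*(r*y))) = r*(e*(r*(v*y))) := by
    intro y
    rw [hv]
    simp only [add_mul, one_mul, smul_mul_assoc, mul_assoc, mul_add, mul_smul_comm]
    rw [hw' y, hj' (w*y)]
  have hMMi : ∀ x : B, r*(e*(r*(s*(k*(s*x))))) = x := by
    intro x; simp only [rsX, ekX]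
  have pass : ∀ x : B, (∀ y : B, x*(r*(e*(r*y))) = r*(e*(r*(x*y)))) →
      ∀ y : B, k*(s*(x*(r*y))) = r*(x*(s*(k*y))) := by
    intro x hx y
    conv_lhs => rw [← hMMi (r*y)]
    rw [hx (s*(k*(s*(r*y))))]
    simp only [srX, keX]
  have passw := pass w hw'
  have passj := pass j hj'
  have passk := pass k hk'
  have passv := pass v hv'
  have hsksk : ∀ y : B, s*(k*(s*(k*y))) = k*(s*(k*(s*y))) := by
    intro y
    have h := passk (s*y)
    simp only [rsX] at h
    rw [h, srX]
  have hvsk : ∀ x : B, v*(s*(k*x)) = s*(k*(s*(v*(r*x)))) := by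
    intro x
    rw [passv x, srX]
  have hksj : ∀ x : B, k*(s*(j*x)) = r*(j*(s*(k*(s*x)))) := by
    intro x
    have h := passj (s*x)
    simpa only [rsX] using h
  -- v relations
  have hvrj : ∀ x : B, v*(r*(j*x)) = s*(j*(r*(v*(s*x)))) := by
    intro x
    rw [hv]
    simp only [mul_add, add_mul, mul_smul_comm, smul_mul_assoc, smul_smul, mul_one,
      one_mul, mul_neg, neg_mul, smul_neg, neg_neg, mul_sub, sub_mul, smul_sub, smul_add,
      mul_assoc, rsX, srX]
    rw [hd4 x]
    simp only [mul_add, add_mul, mul_smul_comm, smul_mul_assoc, smul_smul, mul_one,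
      one_mul, mul_neg, neg_mul, smul_neg, neg_neg, mul_sub, sub_mul, smul_sub, smul_add,
      mul_assoc, rsX, srX]
    rw [h6x (w*(s*x))]
    rw [hs]
    simp only [mul_add, add_mul, mul_smul_comm, smul_mul_assoc, smul_smul, mul_one,
      one_mul, mul_neg, neg_mul, smul_neg, neg_neg, mul_sub, sub_mul, smul_sub, smul_add,
      mul_assoc, hrr]
    module
  have hrvrj : ∀ x : B, r*(v*(r*(j*x))) = j*(r*(v*(s*x))) := by
    intro x
    rw [hvrj x, rsX]
  have hc2v : ∀ x : B, w*(r*(v*(r*x))) = r*(v*(s*(w*x))) := by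
    intro x
    rw [hv]
    simp only [mul_add, add_mul, mul_smul_comm, smul_mul_assoc, smul_smul, mul_one,
      one_mul, mul_neg, neg_mul, smul_neg, neg_neg, mul_sub, sub_mul, smul_sub, smul_add,
      mul_assoc, rsX, srX]
    rw [hd4 (w*(r*x))]
    simp only [mul_add, add_mul, mul_smul_comm, smul_mul_assoc, smul_smul, mul_one,
      one_mul, mul_neg, neg_mul, smul_neg, neg_neg, mul_sub, sub_mul, smul_sub, smul_add,
      mul_assoc, rsX, srX]
    rw [h1x x]
    simp only [mul_add, add_mul, mul_smul_comm, smul_mul_assoc, smul_smul, mul_one,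
      one_mul, mul_neg, neg_mul, smul_neg, neg_neg, mul_sub, sub_mul, smul_sub, smul_add,
      mul_assoc, rsX, srX]
    rw [hs]
    simp only [mul_add, add_mul, mul_smul_comm, smul_mul_assoc, smul_smul, mul_one,
      one_mul, mul_neg, neg_mul, smul_neg, neg_neg, mul_sub, sub_mul, smul_sub, smul_add,
      mul_assoc, hrr]
    module
  have hvsw : ∀ x : B, v*(s*(w*x)) = s*(w*(r*(v*(r*x)))) := by
    intro x
    rw [hc2v x, srX]
  have hc1v : ∀ x : B, v*(r*(v*(r*x))) = r*(v*(r*(v*x))) := by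
    intro x
    have A : v*(r*(v*(r*x))) = v*(r*(r*x)) + l•(s*(j*(r*(v*(s*(w*(r*x))))))) := by
      nth_rewrite 2 [hv]
      simp only [mul_add, add_mul, mul_smul_comm, smul_mul_assoc, mul_one, one_mul, mul_assoc]
      rw [hvrj (w*(r*x))]
    have Bb : r*(v*(r*(v*x))) = r*(v*(r*x)) + l•(j*(r*(v*(s*(w*x))))) := by
      nth_rewrite 2 [hv]
      simp only [mul_add, add_mul, mul_smul_comm, smul_mul_assoc, mul_one, one_mul, mul_assoc]
      rw [hrvrj (w*x)]
    rw [A, Bb, hv]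
    simp only [mul_add, add_mul, mul_smul_comm, smul_mul_assoc, smul_smul, mul_one,
      one_mul, mul_neg, neg_mul, smul_neg, neg_neg, mul_sub, sub_mul, smul_sub, smul_add,
      mul_assoc, rsX, srX]
    rw [h1x x]
    simp only [mul_add, add_mul, mul_smul_comm, smul_mul_assoc, smul_smul, mul_one,
      one_mul, mul_neg, neg_mul, smul_neg, neg_neg, mul_sub, sub_mul, smul_sub, smul_add,
      mul_assoc, rsX, srX]
    rw [hsjrjs (w*(s*(w*x)))]
    rw [hs]
    simp only [mul_add, add_mul, mul_smul_comm, smul_mul_assoc, smul_smul, mul_one,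
      one_mul, mul_neg, neg_mul, smul_neg, neg_neg, mul_sub, sub_mul, smul_sub, smul_add,
      mul_assoc, hrr]
    module
  have hc1vr : v*(r*(v*r)) = r*(v*(r*v)) := by
    have h := hc1v 1
    simpa only [mul_one] using h
  constructor
  · -- (i)
    have h8n : w1*t = t*(s*(w*s)) := by simpa only [mul_assoc] using h8
    have h9x : ∀ x : B, j1*(t*x) = t*(r*(j*(r*x))) := fun x => by
      have h := congrArg (· * x) h9; simpa only [mul_assoc] using h
    have hk1t : k1*t = t*(s*(k*s)) := by
      have h := congrArg (fun y => k1*(y*(s*(k*s)))) h10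
      simp only [mul_assoc, rsX, ekX, ke1X, hrs, mul_one] at h
      exact h.symm
    have hk1tx : ∀ x : B, k1*(t*x) = t*(s*(k*(s*x))) := fun x => by
      have h := congrArg (· * x) hk1t; simpa only [mul_assoc] using h
    have hv1t : (1+l•(j1*w1))*t = t*(r*(v*s)) := by
      rw [hv]
      simp only [mul_add, add_mul, mul_smul_comm, smul_mul_assoc, mul_one, one_mul,
        mul_assoc, hrs]
      rw [h8n, h9x (s*(w*s))]
      simp only [rsX]
    calc (j1*k1*(1+l•(j1*w1)))*t = j1*(k1*((1+l•(j1*w1))*t)) := by simp only [mul_assoc]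
    _ = j1*(k1*(t*(r*(v*s)))) := by rw [hv1t]
    _ = j1*(t*(s*(k*(s*(r*(v*s)))))) := by rw [hk1tx (r*(v*s))]
    _ = j1*(t*(s*(k*(v*s)))) := by rw [srX]
    _ = t*(r*(j*(r*(s*(k*(v*s)))))) := by rw [h9x (s*(k*(v*s)))]
    _ = t*(r*(j*(k*(v*s)))) := by rw [rsX]
    _ = t*r*(j*k*v)*s := by simp only [mul_assoc]
  constructor
  · -- (ii)
    have G2 : (j*(k*v))*(r*(j*r)) = -(r*(j*(r*(j*(k*v))))) := by
      calc (j*(k*v))*(r*(j*r)) = j*(k*(v*(r*(j*r)))) := by simp only [mul_assoc]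
      _ = j*(k*(s*(j*(r*v)))) := by rw [hvrj r, hsr, mul_one]
      _ = j*(r*(j*(s*(k*(s*(r*v)))))) := by rw [hksj (r*v)]
      _ = j*(r*(j*(s*(k*v)))) := by rw [srX]
      _ = -(r*(j*(r*(j*(k*v))))) := by rw [hd1 (k*v), neg_neg]
    have h := congrArg (fun y => s*(y*s)) G2
    simp only [mul_assoc, mul_neg, neg_mul, hrs, hsr, mul_one, srX, rsX] at h
    simpa only [mul_assoc, mul_neg, neg_mul] using h
  constructor
  · -- (iii)
    have E3a : (j*(k*v))*(r*((j*(k*v))*r)) = j*(r*(j*(s*(k*(s*(k*(v*(r*v)))))))) := by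
      calc (j*(k*v))*(r*((j*(k*v))*r)) = j*(k*(v*(r*(j*(k*(v*r)))))) := by
            simp only [mul_assoc]
      _ = j*(k*(s*(j*(r*(v*(s*(k*(v*r)))))))) := by rw [hvrj (k*(v*r))]
      _ = j*(r*(j*(s*(k*(s*(r*(v*(s*(k*(v*r)))))))))) := by rw [hksj (r*(v*(s*(k*(v*r)))))]
      _ = j*(r*(j*(s*(k*(v*(s*(k*(v*r)))))))) := by rw [srX]
      _ = j*(r*(j*(s*(k*(s*(k*(s*(v*(r*(v*r)))))))))) := by rw [hvsk (v*r)]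
      _ = j*(r*(j*(s*(k*(s*(k*(s*(r*(v*(r*v)))))))))) := by rw [hc1vr]
      _ = j*(r*(j*(s*(k*(s*(k*(v*(r*v)))))))) := by rw [srX]
    have E3b : (j*(k*v))*(r*(j*(k*v))) = j*(r*(j*(s*(k*(s*(k*(s*(v*(r*v))))))))) := by
      calc (j*(k*v))*(r*(j*(k*v))) = j*(k*(v*(r*(j*(k*v))))) := by simp only [mul_assoc]
      _ = j*(k*(s*(j*(r*(v*(s*(k*v))))))) := by rw [hvrj (k*v)]
      _ = j*(r*(j*(s*(k*(s*(r*(v*(s*(k*v))))))))) := by rw [hksj (r*(v*(s*(k*v))))]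
      _ = j*(r*(j*(s*(k*(v*(s*(k*v))))))) := by rw [srX]
      _ = j*(r*(j*(s*(k*(s*(k*(s*(v*(r*v))))))))) := by rw [hvsk v]
    have G3 : (j*(k*v))*(r*((j*(k*v))*r)) = -(s*((j*(k*v))*(r*(j*(k*v))))) := by
      rw [E3a, E3b, hsksk (v*(r*v)), h6s (s*(k*(s*(k*(s*(v*(r*v))))))), neg_neg, rsX]
    have h := congrArg (fun y => r*(y*s)) G3
    simp only [mul_assoc, mul_neg, neg_mul, hrs, hsr, mul_one, srX, rsX] at h
    simpa only [mul_assoc, mul_neg, neg_mul] using h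
  constructor
  · -- (iv)
    have G4 : (j*(k*v))*(r*(e*(r*s))) = r*(e*(r*((j*(k*v))*s))) := by
      calc (j*(k*v))*(r*(e*(r*s))) = j*(k*(v*(r*(e*(r*s))))) := by simp only [mul_assoc]
      _ = j*(k*(r*(e*(r*(v*s))))) := by rw [hv' s]
      _ = j*(r*(e*(r*(k*(v*s))))) := by rw [hk' (v*s)]
      _ = r*(e*(r*(j*(k*(v*s))))) := by rw [hj' (k*(v*s))]
      _ = r*(e*(r*((j*(k*v))*s))) := by simp only [mul_assoc]
    have h := congrArg (fun y => s*y) G4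
    simp only [mul_assoc, hrs, mul_one, srX, rsX] at h
    simpa only [mul_assoc] using h
  · -- (v)
    have hvsw1 : v*(s*w) = s*(w*(r*(v*r))) := by
      have h := hvsw 1
      simpa only [mul_one] using h
    simp only [mul_assoc]
    rw [hvsw1, passw (v*r), hsplit (j*(k*(v*r)))]
    simp only [mul_sub, mul_smul_comm]
    rw [hd4 (k*(v*r))]
    simp only [mul_add, add_mul, mul_smul_comm, smul_mul_assoc, smul_smul, mul_one,
      one_mul, mul_neg, neg_mul, smul_neg, neg_neg, mul_sub, sub_mul, smul_sub, smul_add,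
      mul_assoc]
    module

end AuxProof

/-- properties of `Θ* := J L⁻¹ W̄` (with `W̄ = 1 + λJω`,
`W = 1 + λωJ`) in the `GL_q(N)` differential algebra. -/
theorem ThetaStar_relations
    {K : Type*} [Field K] (q : K) (hq : q ≠ 0) (hl : q - q⁻¹ ≠ 0)
    (N : ℕ) (hN : 1 ≤ N) {A : Type*} [Ring A] [Algebra K A]
    (ω L J T : Matrix (Fin N) (Fin N) A)
    (hrel : GLqRels q N ω L J T)
    (Winv : Matrix (Fin N) (Fin N) A)
    (hW1 : (1 + (q - q⁻¹) • (ω * J)) * Winv = 1)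
    (hW2 : Winv * (1 + (q - q⁻¹) • (ω * J)) = 1)
    (Linv : Matrix (Fin N) (Fin N) A)
    (hL1 : L * Linv = 1) (hL2 : Linv * L = 1)
    :
    Mat1 (J * Linv * (1 + (q - q⁻¹) • (J * ω))) * Mat2 T
        = Mat2 T * RhA q N A * Mat2 (J * Linv * (1 + (q - q⁻¹) • (J * ω))) * RhInvA q N A ∧
    RhInvA q N A * Mat2 (J * Linv * (1 + (q - q⁻¹) • (J * ω))) * RhA q N A * Mat2 J
        = -(Mat2 J * RhA q N A * Mat2 (J * Linv * (1 + (q - q⁻¹) • (J * ω))) * RhInvA q N A) ∧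
    RhA q N A * Mat2 (J * Linv * (1 + (q - q⁻¹) • (J * ω))) * RhA q N A *
          Mat2 (J * Linv * (1 + (q - q⁻¹) • (J * ω)))
        = -(Mat2 (J * Linv * (1 + (q - q⁻¹) • (J * ω))) * RhA q N A *
            Mat2 (J * Linv * (1 + (q - q⁻¹) • (J * ω))) * RhInvA q N A) ∧
    RhInvA q N A * Mat2 (J * Linv * (1 + (q - q⁻¹) • (J * ω))) * RhA q N A * Mat2 L
        = Mat2 L * RhA q N A * Mat2 (J * Linv * (1 + (q - q⁻¹) • (J * ω))) * RhInvA q N A ∧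
    RhA q N A * Mat2 (J * Linv * (1 + (q - q⁻¹) • (J * ω))) * RhInvA q N A * Mat2 ω +
        Mat2 ω * RhInvA q N A * Mat2 (J * Linv * (1 + (q - q⁻¹) • (J * ω))) * RhA q N A
      = -(Mat2 ((1 + (q - q⁻¹) • (ω * J)) * Linv * (1 + (q - q⁻¹) • (J * ω))) * RhA q N A) := by
  obtain ⟨h1, h2, h3, h4, h5, h6, h7, h8, h9, h10⟩ := hrel
  have hek : Mat2 L * Mat2 Linv = 1 := by rw [← Mat2_mul, hL1, Mat2_one]
  have hke : Mat2 Linv * Mat2 L = 1 := by rw [← Mat2_mul, hL2, Mat2_one]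
  have hke1 : Mat1 Linv * Mat1 L = 1 := by rw [← Mat1_mul, hL2, Mat1_one]
  have key := key_abstract (q - q⁻¹) (RhA q N A) (RhInvA q N A) (Mat2 ω) (Mat2 J)
    (Mat2 L) (Mat2 Linv) (1 + (q - q⁻¹) • (Mat2 J * Mat2 ω)) (Mat2 T)
    (Mat1 ω) (Mat1 J) (Mat1 L) (Mat1 Linv) rfl (RhInv_eq q N A)
    (Rh_mul_RhInv q hq N A) (RhInv_mul_Rh q hq N A)
    h1 h2 h3 h4 h5 h6 hek hke h8 h9 h10 hke1
  obtain ⟨c1, c2, c3, c4, c5⟩ := key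
  refine ⟨?_, ?_, ?_, ?_, ?_⟩
  · simpa only [Mat1_mul, Mat1_add, Mat1_smul, Mat1_one, Mat2_mul, Mat2_add, Mat2_smul,
      Mat2_one] using c1
  · simpa only [Mat2_mul, Mat2_add, Mat2_smul, Mat2_one] using c2
  · simpa only [Mat2_mul, Mat2_add, Mat2_smul, Mat2_one] using c3
  · simpa only [Mat2_mul, Mat2_add, Mat2_smul, Mat2_one] using c4
  · simpa only [Mat2_mul, Mat2_add, Mat2_smul, Mat2_one] using c5

end
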